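/- Assume the Setup (Section 2) with conditions (main0), (main1). Let {α_n}_{n≥0} satisfy α_n > 0 for all n and Σ_{n≥0} α_n² ‖Q_n‖² ‖X_n‖² < ∞. Then the linear map X, defined on the algebraic span of ∪_n H_n by X x = α_n X_n x for x ∈ H_n, extends to a bounded operator X : H → K₀ satisfying X T = U₀ X. -/
import Mathlib


noncomputable section
set_option linter.unusedSectionVars false
open scoped ENNReal InnerProductSpace
open ContinuousLinearMap

/-- A bounded operator `V` is an isometry. -/
def IsIsometryOp {K : Type} [NormedAddCommGroup K] [InnerProductSpace ℂ K]
    (V : K →L[ℂ] K) : Prop :=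
  ∀ x, ‖V x‖ = ‖x‖

/-- A bounded operator `V` is unitary: an isometry onto. -/
def IsUnitaryOp {K : Type} [NormedAddCommGroup K] [InnerProductSpace ℂ K]
    (V : K →L[ℂ] K) : Prop :=
  (∀ x, ‖V x‖ = ‖x‖) ∧ Function.Surjective V

/-- Lemma 2.2: a summable weighting of the intertwiners `X_n` yields a bounded intertwining
of `T` with `U₀` on the Hilbert direct sum `K₀`. -/
theorem bounded_intertwining_from_weighted_family
    {H : Type} [NormedAddCommGroup H] [InnerProductSpace ℂ H] [CompleteSpace H]
    [TopologicalSpace.SeparableSpace H]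
    (K0 : ℕ → Type) [∀ n, NormedAddCommGroup (K0 n)] [∀ n, InnerProductSpace ℂ (K0 n)]
    [∀ n, CompleteSpace (K0 n)] [∀ n, TopologicalSpace.SeparableSpace (K0 n)]
    -- the unitaries `U_{0n}`, each reductive, with pairwise singular spectral measures:
    (U0 : ∀ n, K0 n →L[ℂ] K0 n)
    (hU0 : ∀ n, IsUnitaryOp (U0 n))
    (hU0red : ∀ (n) (F : Submodule ℂ (K0 n)), IsClosed (F : Set (K0 n)) →
      (∀ x ∈ F, U0 n x ∈ F) → ∀ x ∈ F, ContinuousLinearMap.adjoint (U0 n) x ∈ F)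
    (hsing : ∀ n k, n ≠ k → ∀ Z : K0 n →L[ℂ] K0 k, Z.comp (U0 n) = (U0 k).comp Z → Z = 0)
    (T : H →L[ℂ] H)
    -- the nonzero closed `T`-invariant subspaces `H_n`:
    (Hn : ℕ → Submodule ℂ H)
    (hHcl : ∀ n, IsClosed ((Hn n : Set H)))
    (hHne : ∀ n, Hn n ≠ ⊥)
    (hTH : ∀ n, ∀ x ∈ Hn n, T x ∈ Hn n)
    -- `Vn n = ⋁_{k ≠ n} H_k`:
    (Vn : ℕ → Submodule ℂ H)
    (hVn : ∀ n, Vn n = (⨆ k ∈ {k : ℕ | k ≠ n}, Hn k).topologicalClosure)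
    -- (main0):
    (hmain0 : ∀ n, Hn n ⊓ Vn n = ⊥ ∧ Hn n ⊔ Vn n = ⊤)
    -- (main1): the invertible intertwiners `X_n : H_n → K_{0n}`:
    (X0 : ∀ n, ↥(Hn n) ≃L[ℂ] K0 n)
    (hX0 : ∀ (n) (x : ↥(Hn n)), X0 n ⟨T ↑x, hTH n ↑x x.2⟩ = U0 n (X0 n x))
    -- the skew projections `Q_n` onto `H_n` along `⋁_{k ≠ n} H_k`:
    (Q : ℕ → H →L[ℂ] H)
    (hQmem : ∀ n x, Q n x ∈ Hn n)
    (hQid : ∀ n, ∀ x ∈ Hn n, Q n x = x)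
    (hQker : ∀ n, ∀ x ∈ Vn n, Q n x = 0)
    -- `U₀ = ⊕_n U_{0n}` acting on the Hilbert direct sum `K₀ = ⊕_n K_{0n} = lp K0 2`:
    (Uz : lp K0 2 →L[ℂ] lp K0 2) (hUzU : IsUnitaryOp Uz)
    (hUz : ∀ (a : lp K0 2) (n : ℕ), (Uz a : ∀ i, K0 i) n = U0 n (a n))
    (α : ℕ → ℝ) (hα : ∀ n, 0 < α n)
    (hsum : Summable fun n => α n ^ 2 * ‖Q n‖ ^ 2 * ‖(X0 n : ↥(Hn n) →L[ℂ] K0 n)‖ ^ 2) :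
    ∃ X : H →L[ℂ] lp K0 2,
      (∀ (n) (x : ↥(Hn n)), X ↑x = lp.single 2 n (α n • X0 n x)) ∧
      X.comp T = Uz.comp X := by
  classical
  -- T preserves Vn n
  have hTV : ∀ n, ∀ x ∈ Vn n, T x ∈ Vn n := by
    intro n x hx
    rw [hVn] at hx ⊢
    set S := ⨆ k ∈ {k : ℕ | k ≠ n}, Hn k with hS
    have hmap : ∀ y ∈ S, T y ∈ S := by
      have : S ≤ Submodule.comap (T : H →ₗ[ℂ] H) S := by
        refine iSup₂_le fun k hk => ?_
        intro y hy
        exact Submodule.mem_comap.mpr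
          ((le_iSup₂ (f := fun k (_ : k ∈ {k : ℕ | k ≠ n}) => Hn k) k hk) (hTH k y hy))
      intro y hy; exact this hy
    exact map_mem_closure T.continuous hx hmap
  -- Q k kills Hn n for n ≠ k
  have hQ0 : ∀ n k, n ≠ k → ∀ x ∈ Hn n, Q k x = 0 := by
    intro n k hnk x hx
    apply hQker k
    rw [hVn]
    exact (Submodule.le_topologicalClosure _)
      ((le_iSup₂ (f := fun j (_ : j ∈ {j : ℕ | j ≠ k}) => Hn j) n hnk) hx)
  -- Q n commutes with T
  have hQT : ∀ n x, Q n (T x) = T (Q n x) := by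
    intro n x
    have hx : x ∈ Hn n ⊔ Vn n := by rw [(hmain0 n).2]; trivial
    obtain ⟨a, ha, b, hb, rfl⟩ := Submodule.mem_sup.mp hx
    have h1 : Q n (a + b) = a := by
      rw [map_add, hQid n a ha, hQker n b hb, add_zero]
    rw [map_add T, map_add (Q n), hQid n _ (hTH n a ha), hQker n _ (hTV n b hb),
      add_zero, h1]
  -- the coordinate functions
  set g : H → ∀ n, K0 n := fun x n => α n • X0 n ⟨Q n x, hQmem n x⟩ with hg
  set c : ℕ → ℝ := fun n => α n * ‖Q n‖ * ‖(X0 n : ↥(Hn n) →L[ℂ] K0 n)‖ with hc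
  have hc2 : Summable fun n => c n ^ 2 := by
    simpa only [hc, mul_pow] using hsum
  have hgle : ∀ x n, ‖g x n‖ ≤ c n * ‖x‖ := by
    intro x n
    have h1 : ‖g x n‖ = α n * ‖X0 n ⟨Q n x, hQmem n x⟩‖ := by
      rw [hg]; simp only [norm_smul, Real.norm_eq_abs, abs_of_pos (hα n)]
    have h2 : ‖X0 n ⟨Q n x, hQmem n x⟩‖ ≤
        ‖(X0 n : ↥(Hn n) →L[ℂ] K0 n)‖ * ‖(⟨Q n x, hQmem n x⟩ : ↥(Hn n))‖ :=
      (X0 n : ↥(Hn n) →L[ℂ] K0 n).le_opNorm _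
    have h3 : ‖(⟨Q n x, hQmem n x⟩ : ↥(Hn n))‖ = ‖Q n x‖ := rfl
    have h4 : ‖Q n x‖ ≤ ‖Q n‖ * ‖x‖ := (Q n).le_opNorm x
    rw [h1, hc]
    calc α n * ‖X0 n ⟨Q n x, hQmem n x⟩‖
        ≤ α n * (‖(X0 n : ↥(Hn n) →L[ℂ] K0 n)‖ * (‖Q n‖ * ‖x‖)) := by
          apply mul_le_mul_of_nonneg_left _ (hα n).le
          refine h2.trans ?_
          rw [h3]
          exact mul_le_mul_of_nonneg_left h4 (norm_nonneg ((X0 n : ↥(Hn n) →L[ℂ] K0 n)))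
      _ = α n * ‖Q n‖ * ‖(X0 n : ↥(Hn n) →L[ℂ] K0 n)‖ * ‖x‖ := by ring
  have hgsq : ∀ x n, ‖g x n‖ ^ 2 ≤ c n ^ 2 * ‖x‖ ^ 2 := by
    intro x n
    rw [← mul_pow]
    exact pow_le_pow_left₀ (norm_nonneg _) (hgle x n) 2
  have hgsum : ∀ x, Summable fun n => ‖g x n‖ ^ 2 := by
    intro x
    exact Summable.of_nonneg_of_le (fun n => by positivity) (hgsq x)
      ((hc2.mul_right (‖x‖ ^ 2)))
  have htwo : (2 : ℝ≥0∞).toReal = 2 := by norm_num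
  have hmem : ∀ x, Memℓp (g x) 2 := by
    intro x
    apply memℓp_gen
    have : ∀ n, ‖g x n‖ ^ (2 : ℝ≥0∞).toReal = ‖g x n‖ ^ 2 := by
      intro n; rw [htwo, Real.rpow_two]
    simpa only [this] using hgsum x
  -- the linear map
  let L : H →ₗ[ℂ] lp K0 2 :=
    { toFun := fun x => ⟨g x, hmem x⟩
      map_add' := by
        intro x y
        apply lp.ext; funext n
        show g (x + y) n = g x n + g y n
        have : (⟨Q n (x + y), hQmem n (x + y)⟩ : ↥(Hn n)) =
            ⟨Q n x, hQmem n x⟩ + ⟨Q n y, hQmem n y⟩ :=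
          Subtype.ext (map_add (Q n) x y)
        show α n • X0 n ⟨Q n (x + y), hQmem n (x + y)⟩ =
          α n • X0 n ⟨Q n x, hQmem n x⟩ + α n • X0 n ⟨Q n y, hQmem n y⟩
        rw [this, map_add, smul_add]
      map_smul' := by
        intro m x
        apply lp.ext; funext n
        show g (m • x) n = m • g x n
        have : (⟨Q n (m • x), hQmem n (m • x)⟩ : ↥(Hn n)) = m • ⟨Q n x, hQmem n x⟩ :=
          Subtype.ext (map_smul (Q n) m x)
        show α n • X0 n ⟨Q n (m • x), hQmem n (m • x)⟩ =
          m • (α n • X0 n ⟨Q n x, hQmem n x⟩)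
        rw [this, map_smul]
        exact smul_comm (α n) m _ }
  have hLapp : ∀ x n, (L x : ∀ i, K0 i) n = g x n := fun x n => rfl
  -- boundedness
  set C : ℝ := Real.sqrt (∑' n, c n ^ 2) with hCdef
  have hCnn : 0 ≤ C := Real.sqrt_nonneg _
  have hLle : ∀ x, ‖L x‖ ≤ C * ‖x‖ := by
    intro x
    have h2 : (0 : ℝ) < (2 : ℝ≥0∞).toReal := by norm_num
    have hn := lp.norm_rpow_eq_tsum h2 (L x)
    have hsq : ‖L x‖ ^ 2 = ∑' n, ‖g x n‖ ^ 2 := by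
      have : ∀ n, ‖(L x : ∀ i, K0 i) n‖ ^ (2 : ℝ≥0∞).toReal = ‖g x n‖ ^ 2 := by
        intro n; rw [hLapp, htwo, Real.rpow_two]
      rw [← Real.rpow_two, ← htwo, hn]
      exact tsum_congr this
    have hle : ‖L x‖ ^ 2 ≤ (∑' n, c n ^ 2) * ‖x‖ ^ 2 := by
      rw [hsq, ← tsum_mul_right]
      exact Summable.tsum_le_tsum (hgsq x) (hgsum x) (hc2.mul_right _)
    have hrhs : (∑' n, c n ^ 2) * ‖x‖ ^ 2 = (C * ‖x‖) ^ 2 := by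
      rw [mul_pow, hCdef, Real.sq_sqrt (tsum_nonneg fun n => by positivity)]
    rw [hrhs] at hle
    exact (pow_le_pow_iff_left₀ (norm_nonneg _) (by positivity) two_ne_zero).mp hle
  let X : H →L[ℂ] lp K0 2 := L.mkContinuous C hLle
  have hXapp : ∀ x n, (X x : ∀ i, K0 i) n = g x n := fun x n => rfl
  refine ⟨X, ?_, ?_⟩
  · intro n x
    apply lp.ext; funext k
    rw [hXapp]
    by_cases hk : k = n
    · subst hk
      rw [lp.single_apply_self]
      have : (⟨Q k ↑x, hQmem k ↑x⟩ : ↥(Hn k)) = x := Subtype.ext (hQid k ↑x x.2)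
      rw [hg]; simp only [this]
    · rw [lp.single_apply_ne 2 n _ hk]
      have : (⟨Q k ↑x, hQmem k ↑x⟩ : ↥(Hn k)) = 0 :=
        Subtype.ext (hQ0 n k (fun h => hk h.symm) ↑x x.2)
      rw [hg]; simp only [this, map_zero, smul_zero]
  · ext x n
    show (X (T x) : ∀ i, K0 i) n = (Uz (X x) : ∀ i, K0 i) n
    rw [hXapp, hUz, hXapp]
    have h1 : (⟨Q n (T x), hQmem n (T x)⟩ : ↥(Hn n)) =
        ⟨T (Q n x), hTH n (Q n x) (hQmem n x)⟩ := Subtype.ext (hQT n x)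
    have h2 := hX0 n ⟨Q n x, hQmem n x⟩
    rw [hg]
    simp only [h1]
    rw [show (⟨T (Q n x), hTH n (Q n x) (hQmem n x)⟩ : ↥(Hn n)) =
        ⟨T ↑(⟨Q n x, hQmem n x⟩ : ↥(Hn n)), hTH n _ (hQmem n x)⟩ from rfl, h2,
      ← (U0 n).map_smul_of_tower]
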